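/- (Kernel characterization: G₊ h = 0 or G₋ h = 0 is equivalent to h being average-free-trivial.) For every integrable h : α → ℝ: (i) (G₊ h)(x) = 0 for μ-almost every x if and only if h(x) = ⟨h⟩ for μ-almost every x; (ii) (G₋ h)(x) = 0 for μ-almost every x if and only if h(x) = ⟨h⟩ for μ-almost every x. Equivalently, the average-free part of W·(E⁻¹ h) vanishes μ-a.e. if and only if the average-free part of h vanishes μ-a.e. -/

import Mathlib

open MeasureTheory

/-- Total (coordinate) volume `V := μ(α)` as a real number. -/
noncomputable def totalVol {α : Type*} [MeasurableSpace α] (μ : Measure α) : ℝ :=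
  (μ Set.univ).toReal

/-- Spatial average `⟨f⟩ := (1/V) ∫ f dμ`. -/
noncomputable def avg {α : Type*} [MeasurableSpace α] (μ : Measure α) (f : α → ℝ) : ℝ :=
  (totalVol μ)⁻¹ * ∫ x, f x ∂μ

/-- The delocalization operator `E`:
`(E g)(x) = g(x) + ⟨g⟩ − W(x)⁻¹ ⟨W·g⟩`. -/
noncomputable def opE {α : Type*} [MeasurableSpace α] (μ : Measure α) (W : α → ℝ)
    (g : α → ℝ) : α → ℝ :=
  fun x => g x + avg μ g - (W x)⁻¹ * avg μ (fun y => W y * g y)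

/-- The operator `E⁻¹`:
`(E⁻¹ h)(x) = h(x) − W(x)⁻¹ (∫h)/(∫W⁻¹) − (∫W·h)/(∫W) + 2 W(x)⁻¹ V (∫W·h)/((∫W⁻¹)(∫W))`. -/
noncomputable def opEinv {α : Type*} [MeasurableSpace α] (μ : Measure α) (W : α → ℝ)
    (h : α → ℝ) : α → ℝ :=
  fun x => h x
    - (W x)⁻¹ * (∫ y, h y ∂μ) / (∫ y, (W y)⁻¹ ∂μ)
    - (∫ y, W y * h y ∂μ) / (∫ y, W y ∂μ)
    + 2 * (W x)⁻¹ * totalVol μ * (∫ y, W y * h y ∂μ)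
        / ((∫ y, (W y)⁻¹ ∂μ) * (∫ y, W y ∂μ))

/-- The projector-type operator `G₊`:
`(G₊ h)(x) = W(x)·h(x) − W(x)·(∫W·h)/(∫W)`. -/
noncomputable def opGplus {α : Type*} [MeasurableSpace α] (μ : Measure α) (W : α → ℝ)
    (h : α → ℝ) : α → ℝ :=
  fun x => W x * h x - W x * (∫ y, W y * h y ∂μ) / (∫ y, W y ∂μ)

/-- The projector-type operator `G₋`:
`(G₋ h)(x) = W(x)⁻¹·h(x) − W(x)⁻¹·(∫W⁻¹·h)/(∫W⁻¹)`. -/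
noncomputable def opGminus {α : Type*} [MeasurableSpace α] (μ : Measure α) (W : α → ℝ)
    (h : α → ℝ) : α → ℝ :=
  fun x => (W x)⁻¹ * h x - (W x)⁻¹ * (∫ y, (W y)⁻¹ * h y ∂μ) / (∫ y, (W y)⁻¹ ∂μ)

/-!
Both `G₊` and `G₋` have the form `F·h − F·m` with `F` a nowhere-vanishing weight and `m` the
`F`-weighted mean of `h`, so `G h = 0` a.e. says exactly that `h` is a.e. constant, and an a.e.
constant function equals its average. For `E⁻¹` the key identity is `W·E⁻¹h = G₊h + const`,
while `G₊h` has integral zero; hence the average-free part of `W·E⁻¹h` is `G₊h` itself.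
-/

open Filter

section

variable {α : Type*} [MeasurableSpace α] {μ : Measure α}

lemma totalVol_eq_real_univ : totalVol μ = μ.real Set.univ := rfl

lemma avg_eq_of_ae_eq_const (hV : totalVol μ ≠ 0) {f : α → ℝ} {k : ℝ}
    (hf : ∀ᵐ x ∂μ, f x = k) : avg μ f = k := by
  rw [avg, integral_congr_ae hf, integral_const, smul_eq_mul, ← totalVol_eq_real_univ,
    inv_mul_cancel_left₀ hV]

lemma avg_add_const [IsFiniteMeasure μ] (hV : totalVol μ ≠ 0) {g : α → ℝ}
    (hg : Integrable g μ) (k : ℝ) : avg μ (fun x => g x + k) = avg μ g + k := by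
  rw [avg, avg, integral_add hg (integrable_const k), integral_const, smul_eq_mul,
    ← totalVol_eq_real_univ, mul_add, inv_mul_cancel_left₀ hV]

lemma integral_mul_div_integral_of_ae_eq_const {F f : α → ℝ} {k : ℝ}
    (hF : ∫ x, F x ∂μ ≠ 0) (hf : ∀ᵐ x ∂μ, f x = k) :
    (∫ x, F x * f x ∂μ) / (∫ x, F x ∂μ) = k := by
  have hFf : ∫ x, F x * f x ∂μ = (∫ x, F x ∂μ) * k := by
    rw [← integral_mul_const]
    exact integral_congr_ae (hf.mono fun x hx => congrArg (F x * ·) hx)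
  rw [hFf, mul_div_cancel_left₀ _ hF]

/-- The common shape of `G₊` (with `F = W`) and `G₋` (with `F = W⁻¹`). -/
lemma weighted_deviation_ae_eq_zero_iff (hV : totalVol μ ≠ 0) {F h : α → ℝ}
    (hF0 : ∀ x, F x ≠ 0) (hF : ∫ x, F x ∂μ ≠ 0) :
    (∀ᵐ x ∂μ, F x * h x - F x * (∫ y, F y * h y ∂μ) / (∫ y, F y ∂μ) = 0) ↔
      ∀ᵐ x ∂μ, h x = avg μ h := by
  simp_rw [mul_div_assoc, ← mul_sub, mul_eq_zero, hF0, false_or, sub_eq_zero]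
  constructor
  · intro H
    rwa [avg_eq_of_ae_eq_const hV H]
  · intro H
    rwa [integral_mul_div_integral_of_ae_eq_const hF H]

lemma integral_pos_of_forall_pos [NeZero μ] {f : α → ℝ} (hf : Integrable f μ)
    (hpos : ∀ x, 0 < f x) : 0 < ∫ x, f x ∂μ := by
  rw [integral_pos_iff_support_of_nonneg (fun x => (hpos x).le) hf,
    Function.support_eq_univ fun x => (hpos x).ne']
  exact Measure.measure_univ_pos.mpr (NeZero.ne μ)

lemma integrable_of_nonneg_of_le [IsFiniteMeasure μ] {f : α → ℝ} (hf : Measurable f)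
    {C : ℝ} (hf0 : ∀ x, 0 ≤ f x) (hfC : ∀ x, f x ≤ C) : Integrable f μ :=
  Integrable.of_bound hf.aestronglyMeasurable C
    (Eventually.of_forall fun x => by rw [Real.norm_of_nonneg (hf0 x)]; exact hfC x)

lemma integrable_inv_of_le [IsFiniteMeasure μ] {f : α → ℝ} (hf : Measurable f)
    {c : ℝ} (hc : 0 < c) (hcf : ∀ x, c ≤ f x) : Integrable (fun x => (f x)⁻¹) μ :=
  integrable_of_nonneg_of_le hf.inv (fun x => (inv_pos.mpr (hc.trans_le (hcf x))).le)
    (fun x => inv_anti₀ hc (hcf x))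

lemma integrable_opGplus {W h : α → ℝ} (hW : Integrable W μ)
    (hWh : Integrable (fun x => W x * h x) μ) : Integrable (opGplus μ W h) μ :=
  hWh.sub ((hW.mul_const _).div_const _)

lemma integral_opGplus {W h : α → ℝ} (hW : Integrable W μ)
    (hWh : Integrable (fun x => W x * h x) μ) (hIW : ∫ x, W x ∂μ ≠ 0) :
    ∫ x, opGplus μ W h x ∂μ = 0 := by
  unfold opGplus
  rw [integral_sub hWh ((hW.mul_const _).div_const _), integral_div,
    integral_mul_const, mul_div_cancel_left₀ _ hIW, sub_self]

lemma mul_opEinv_eq_opGplus_add {W : α → ℝ} (h : α → ℝ) {x : α} (hWx : W x ≠ 0) :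
    W x * opEinv μ W h x = opGplus μ W h x +
      (2 * totalVol μ * (∫ y, W y * h y ∂μ) / ((∫ y, (W y)⁻¹ ∂μ) * (∫ y, W y ∂μ))
        - (∫ y, h y ∂μ) / (∫ y, (W y)⁻¹ ∂μ)) := by
  simp only [opEinv, opGplus]
  field_simp
  ring

lemma mul_opEinv_sub_avg [IsFiniteMeasure μ] (hV : totalVol μ ≠ 0) {W h : α → ℝ}
    (hW0 : ∀ x, W x ≠ 0) (hW : Integrable W μ) (hWh : Integrable (fun x => W x * h x) μ)
    (hIW : ∫ x, W x ∂μ ≠ 0) (x : α) :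
    W x * opEinv μ W h x - avg μ (fun y => W y * opEinv μ W h y) = opGplus μ W h x := by
  simp_rw [mul_opEinv_eq_opGplus_add h (hW0 _)]
  rw [avg_add_const hV (integrable_opGplus hW hWh), avg, integral_opGplus hW hWh hIW]
  ring

end

theorem opG_kernel_characterization_general
    {α : Type*} [MeasurableSpace α] (μ : Measure α) [IsFiniteMeasure μ]
    (hV : 0 < totalVol μ)
    (W : α → ℝ) (hW : Measurable W)
    (c C : ℝ) (hc : 0 < c)
    (hbound : ∀ x, c ≤ W x ∧ W x ≤ C) :
    ∀ h : α → ℝ, Integrable h μ →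
      ((∀ᵐ x ∂μ, opGplus μ W h x = 0) ↔ (∀ᵐ x ∂μ, h x = avg μ h)) ∧
      ((∀ᵐ x ∂μ, opGminus μ W h x = 0) ↔ (∀ᵐ x ∂μ, h x = avg μ h)) ∧
      ((∀ᵐ x ∂μ,
          W x * opEinv μ W h x - avg μ (fun y => W y * opEinv μ W h y) = 0)
        ↔ (∀ᵐ x ∂μ, h x - avg μ h = 0)) := by
  intro h hint
  have hWpos : ∀ x, 0 < W x := fun x => hc.trans_le (hbound x).1
  have : NeZero μ := ⟨fun hμ => by simp [totalVol, hμ] at hV⟩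
  have hWi : Integrable W μ :=
    integrable_of_nonneg_of_le hW (fun x => (hWpos x).le) (fun x => (hbound x).2)
  have hWinvi : Integrable (fun x => (W x)⁻¹) μ :=
    integrable_inv_of_le hW hc (fun x => (hbound x).1)
  have hWh : Integrable (fun x => W x * h x) μ :=
    hint.bdd_mul hW.aestronglyMeasurable (Eventually.of_forall fun x => by
      rw [Real.norm_of_nonneg (hWpos x).le]; exact (hbound x).2)
  have hIW : ∫ x, W x ∂μ ≠ 0 := (integral_pos_of_forall_pos hWi hWpos).ne'
  have hIWinv : ∫ x, (W x)⁻¹ ∂μ ≠ 0 :=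
    (integral_pos_of_forall_pos hWinvi fun x => inv_pos.mpr (hWpos x)).ne'
  have hplus : (∀ᵐ x ∂μ, opGplus μ W h x = 0) ↔ ∀ᵐ x ∂μ, h x = avg μ h :=
    weighted_deviation_ae_eq_zero_iff hV.ne' (fun x => (hWpos x).ne') hIW
  refine ⟨hplus,
    weighted_deviation_ae_eq_zero_iff hV.ne' (fun x => (inv_pos.mpr (hWpos x)).ne') hIWinv, ?_⟩
  simp_rw [mul_opEinv_sub_avg hV.ne' (fun x => (hWpos x).ne') hWi hWh hIW, sub_eq_zero]
  exact hplus

/-- Kernel characterization: `G₊ h = 0` or `G₋ h = 0` iff `h` is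
average-free-trivial. For every integrable `h`:
(i) `G₊ h = 0` μ-a.e. iff `h = ⟨h⟩` μ-a.e.;
(ii) `G₋ h = 0` μ-a.e. iff `h = ⟨h⟩` μ-a.e.;
(iii) equivalently, the average-free part of `W·(E⁻¹ h)` vanishes μ-a.e. iff
the average-free part of `h` vanishes μ-a.e. -/
theorem opG_kernel_characterization
    {α : Type*} [MeasurableSpace α] (μ : Measure α) [IsFiniteMeasure μ]
    (hV : 0 < totalVol μ)
    (W : α → ℝ) (hW : Measurable W)
    (c C : ℝ) (hc : 0 < c) (hcC : c ≤ C)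
    (hbound : ∀ x, c ≤ W x ∧ W x ≤ C) :
    ∀ h : α → ℝ, Integrable h μ →
      ((∀ᵐ x ∂μ, opGplus μ W h x = 0) ↔ (∀ᵐ x ∂μ, h x = avg μ h)) ∧
      ((∀ᵐ x ∂μ, opGminus μ W h x = 0) ↔ (∀ᵐ x ∂μ, h x = avg μ h)) ∧
      ((∀ᵐ x ∂μ,
          W x * opEinv μ W h x - avg μ (fun y => W y * opEinv μ W h y) = 0)
        ↔ (∀ᵐ x ∂μ, h x - avg μ h = 0)) :=
  opG_kernel_characterization_general μ hV W hW c C hc hbound
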